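/- arXiv:1905.00144 — 3 statements merged into one kernel-verified Lean document; each statement's English description precedes it below -/
import Mathlib

section
/- Let S ⊂ R^n be measurable with 0 < |S| < ∞ and let f₁, f₂ ∈ L^1(S) be real-valued. Set f = min(f₁, f₂) (pointwise). Then ⨍_S |f - f_S| ≤ ⨍_S |f₁ - (f₁)_S| + ⨍_S |f₂ - (f₂)_S|. -/
/-!
Since `|h| = 2 h⁻ + h` and `h - h_S` has mean zero, the mean oscillation `⨍_S |h - h_S|` is twice
the mean of `(h - h_S)⁻`. For `f = min f₁ f₂` we have `f_S ≤ (f₁)_S` and `f_S ≤ (f₂)_S`, which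
gives the pointwise bound `(f - f_S)⁻ ≤ (f₁ - (f₁)_S)⁻ + (f₂ - (f₂)_S)⁻`; integrate.
-/

open MeasureTheory

section NegPart

variable {α : Type*} [AddCommGroup α] [LinearOrder α] [IsOrderedAddMonoid α]

lemma negPart_min_sub_le {a b m m₁ m₂ : α} (h₁ : m ≤ m₁) (h₂ : m ≤ m₂) :
    (min a b - m)⁻ ≤ (a - m₁)⁻ + (b - m₂)⁻ := by
  have hmin : min (a - m₁) (b - m₂) ≤ min a b - m := by
    rw [← min_sub_sub_right]
    exact min_le_min (sub_le_sub_left h₁ a) (sub_le_sub_left h₂ b)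
  calc (min a b - m)⁻ ≤ (min (a - m₁) (b - m₂))⁻ := negPart_anti hmin
    _ = max (a - m₁)⁻ (b - m₂)⁻ := negPart_min _ _
    _ ≤ (a - m₁)⁻ + (b - m₂)⁻ := max_le_add_of_nonneg (negPart_nonneg _) (negPart_nonneg _)

end NegPart

lemma abs_eq_two_mul_negPart_add (a : ℝ) : |a| = 2 * a⁻ + a := by
  linarith [negPart_add_posPart a, posPart_sub_negPart a]

namespace MeasureTheory

variable {α : Type*} [MeasurableSpace α] {μ : Measure α} {f g : α → ℝ}

lemma average_mono (hf : Integrable f μ) (hg : Integrable g μ) (hfg : f ≤ g) :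
    ⨍ x, f x ∂μ ≤ ⨍ x, g x ∂μ := by
  simp only [average_eq, smul_eq_mul]
  exact mul_le_mul_of_nonneg_left (integral_mono hf hg hfg) (by positivity)

lemma Integrable.negPart (hf : Integrable f μ) : Integrable (fun x ↦ (f x)⁻) μ :=
  hf.neg_part

lemma integral_abs_sub_average [IsFiniteMeasure μ] (hf : Integrable f μ) :
    ∫ x, |f x - ⨍ y, f y ∂μ| ∂μ = 2 * ∫ x, (f x - ⨍ y, f y ∂μ)⁻ ∂μ := by
  have hsub : Integrable (fun x ↦ f x - ⨍ y, f y ∂μ) μ := hf.sub (integrable_const _)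
  have hmean : ∫ x, (f x - ⨍ y, f y ∂μ) ∂μ = 0 := by
    rw [integral_sub hf (integrable_const _), integral_const, measure_smul_average, sub_self]
  simp_rw [abs_eq_two_mul_negPart_add]
  rw [integral_add (hsub.negPart.const_mul 2) hsub, integral_const_mul, hmean, add_zero]

lemma integral_abs_sub_average_min_le [IsFiniteMeasure μ] (hf : Integrable f μ)
    (hg : Integrable g μ) :
    ∫ x, |min (f x) (g x) - ⨍ y, min (f y) (g y) ∂μ| ∂μ
      ≤ ∫ x, |f x - ⨍ y, f y ∂μ| ∂μ + ∫ x, |g x - ⨍ y, g y ∂μ| ∂μ := by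
  have hmin : Integrable (fun x ↦ min (f x) (g x)) μ := hf.inf hg
  have hf' : Integrable (fun x ↦ (f x - ⨍ y, f y ∂μ)⁻) μ := (hf.sub (integrable_const _)).negPart
  have hg' : Integrable (fun x ↦ (g x - ⨍ y, g y ∂μ)⁻) μ := (hg.sub (integrable_const _)).negPart
  rw [integral_abs_sub_average hmin, integral_abs_sub_average hf, integral_abs_sub_average hg,
    ← mul_add, ← integral_add hf' hg']
  have hmin' := (hmin.sub (integrable_const (⨍ y, min (f y) (g y) ∂μ))).negPart
  refine mul_le_mul_of_nonneg_left (integral_mono hmin' (hf'.add hg') fun x ↦ ?_) zero_le_two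
  exact negPart_min_sub_le (average_mono hmin hf fun x ↦ min_le_left _ _)
    (average_mono hmin hg fun x ↦ min_le_right _ _)

theorem average_abs_sub_average_min_le [IsFiniteMeasure μ] (hf : Integrable f μ)
    (hg : Integrable g μ) :
    ⨍ x, |min (f x) (g x) - ⨍ y, min (f y) (g y) ∂μ| ∂μ
      ≤ ⨍ x, |f x - ⨍ y, f y ∂μ| ∂μ + ⨍ x, |g x - ⨍ y, g y ∂μ| ∂μ := by
  have h := integral_abs_sub_average_min_le hf hg
  simp only [average_eq, smul_eq_mul, ← mul_add] at h ⊢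
  exact mul_le_mul_of_nonneg_left h (by positivity)

end MeasureTheory

theorem stmt_11_general (n : ℕ)
    (S : Set (EuclideanSpace ℝ (Fin n)))
    (hfin : volume S < ⊤)
    (f₁ f₂ : EuclideanSpace ℝ (Fin n) → ℝ)
    (hf₁ : IntegrableOn f₁ S) (hf₂ : IntegrableOn f₂ S) :
    (⨍ x in S, |min (f₁ x) (f₂ x) - ⨍ y in S, min (f₁ y) (f₂ y)|)
      ≤ (⨍ x in S, |f₁ x - ⨍ y in S, f₁ y|) + ⨍ x in S, |f₂ x - ⨍ y in S, f₂ y| := by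
  have : IsFiniteMeasure (volume.restrict S) := isFiniteMeasure_restrict.2 hfin.ne
  exact average_abs_sub_average_min_le hf₁ hf₂

/-- For `f = min(f₁, f₂)` pointwise,
`⨍_S |f - f_S| ≤ ⨍_S |f₁ - (f₁)_S| + ⨍_S |f₂ - (f₂)_S|`. -/
theorem stmt_11 (n : ℕ)
    (S : Set (EuclideanSpace ℝ (Fin n))) (hS : MeasurableSet S)
    (h0 : 0 < volume S) (hfin : volume S < ⊤)
    (f₁ f₂ : EuclideanSpace ℝ (Fin n) → ℝ)
    (hf₁ : IntegrableOn f₁ S) (hf₂ : IntegrableOn f₂ S) :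
    (⨍ x in S, |min (f₁ x) (f₂ x) - ⨍ y in S, min (f₁ y) (f₂ y)|)
      ≤ (⨍ x in S, |f₁ x - ⨍ y in S, f₁ y|) + ⨍ x in S, |f₂ x - ⨍ y in S, f₂ y| :=
  stmt_11_general n S hfin f₁ f₂ hf₁ hf₂
end

section
/- Let S ⊂ R^n be measurable with 0 < |S| < ∞ and let f₁, f₂ ∈ L^2(S) be real-valued. Set f = max(f₁, f₂) (pointwise). Then ⨍_S |f - f_S|^2 ≤ ⨍_S |f₁ - (f₁)_S|^2 + ⨍_S |f₂ - (f₂)_S|^2. -/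
/-!
The mean minimizes the mean-square deviation: `⨍ |g - g_S|² ≤ ⨍ |g - c|²` for every constant `c`
(the variance of `g` is that of `g - c`). Taking `c = max((f₁)_S, (f₂)_S)`, the pointwise bound
`|max(a, b) - max(c, d)| ≤ max(|a - c|, |b - d|)` gives
`|f - c|² ≤ |f₁ - (f₁)_S|² + |f₂ - (f₂)_S|²`, and averaging concludes.
-/

open MeasureTheory ProbabilityTheory

lemma sq_max_sub_max_le (a b c d : ℝ) : (max a b - max c d) ^ 2 ≤ (a - c) ^ 2 + (b - d) ^ 2 := by
  calc (max a b - max c d) ^ 2 ≤ max |a - c| |b - d| ^ 2 := by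
        rw [← sq_abs]; gcongr; exact abs_max_sub_max_le_max a b c d
    _ ≤ (a - c) ^ 2 + (b - d) ^ 2 := by
        rcases max_choice |a - c| |b - d| with h | h <;> rw [h, sq_abs]
        · exact le_add_of_nonneg_right (sq_nonneg _)
        · exact le_add_of_nonneg_left (sq_nonneg _)

section

variable {Ω : Type*} [MeasurableSpace Ω] {μ : Measure Ω}

lemma integral_sq_sub_integral_le_integral_sq_sub [IsProbabilityMeasure μ] {g : Ω → ℝ}
    (hg : AEStronglyMeasurable g μ) (c : ℝ) :
    ∫ x, (g x - ∫ y, g y ∂μ) ^ 2 ∂μ ≤ ∫ x, (g x - c) ^ 2 ∂μ := by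
  rw [← variance_eq_integral hg.aemeasurable, ← variance_sub_const hg c]
  exact variance_le_expectation_sq (hg.sub aestronglyMeasurable_const)

theorem integral_sq_sub_integral_max_le [IsProbabilityMeasure μ] {f₁ f₂ : Ω → ℝ}
    (hf₁ : MemLp f₁ 2 μ) (hf₂ : MemLp f₂ 2 μ) :
    ∫ x, (max (f₁ x) (f₂ x) - ∫ y, max (f₁ y) (f₂ y) ∂μ) ^ 2 ∂μ
      ≤ ∫ x, (f₁ x - ∫ y, f₁ y ∂μ) ^ 2 ∂μ + ∫ x, (f₂ x - ∫ y, f₂ y ∂μ) ^ 2 ∂μ := by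
  set m₁ := ∫ y, f₁ y ∂μ
  set m₂ := ∫ y, f₂ y ∂μ
  have hf : MemLp (fun x ↦ max (f₁ x) (f₂ x)) 2 μ := hf₁.sup hf₂
  have h₁ := (hf₁.sub (memLp_const m₁)).integrable_sq
  have h₂ := (hf₂.sub (memLp_const m₂)).integrable_sq
  calc _ ≤ ∫ x, (max (f₁ x) (f₂ x) - max m₁ m₂) ^ 2 ∂μ :=
        integral_sq_sub_integral_le_integral_sq_sub hf.1 _
    _ ≤ ∫ x, ((f₁ x - m₁) ^ 2 + (f₂ x - m₂) ^ 2) ∂μ :=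
        integral_mono (hf.sub (memLp_const _)).integrable_sq (h₁.add h₂)
          fun x ↦ sq_max_sub_max_le _ _ _ _
    _ = _ := integral_add h₁ h₂

theorem average_sq_sub_average_max_le [IsFiniteMeasure μ] {f₁ f₂ : Ω → ℝ}
    (hf₁ : MemLp f₁ 2 μ) (hf₂ : MemLp f₂ 2 μ) :
    ⨍ x, (max (f₁ x) (f₂ x) - ⨍ y, max (f₁ y) (f₂ y) ∂μ) ^ 2 ∂μ
      ≤ ⨍ x, (f₁ x - ⨍ y, f₁ y ∂μ) ^ 2 ∂μ + ⨍ x, (f₂ x - ⨍ y, f₂ y ∂μ) ^ 2 ∂μ := by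
  rcases eq_zero_or_neZero μ with rfl | _
  · simp
  have hc : (μ Set.univ)⁻¹ ≠ ⊤ := ENNReal.inv_ne_top.2 (NeZero.ne _)
  simp only [average_eq']
  exact integral_sq_sub_integral_max_le (hf₁.smul_measure hc) (hf₂.smul_measure hc)

end

theorem stmt_12_general (n : ℕ)
    (S : Set (EuclideanSpace ℝ (Fin n)))
    (hfin : volume S < ⊤)
    (f₁ f₂ : EuclideanSpace ℝ (Fin n) → ℝ)
    (hf₁ : MemLp f₁ 2 (volume.restrict S)) (hf₂ : MemLp f₂ 2 (volume.restrict S)) :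
    (⨍ x in S, |max (f₁ x) (f₂ x) - ⨍ y in S, max (f₁ y) (f₂ y)| ^ 2)
      ≤ (⨍ x in S, |f₁ x - ⨍ y in S, f₁ y| ^ 2) + ⨍ x in S, |f₂ x - ⨍ y in S, f₂ y| ^ 2 := by
  have : IsFiniteMeasure (volume.restrict S) := isFiniteMeasure_restrict.2 hfin.ne
  simpa only [sq_abs] using average_sq_sub_average_max_le hf₁ hf₂

/-- For `f = max(f₁, f₂)` pointwise,
`⨍_S |f - f_S|² ≤ ⨍_S |f₁ - (f₁)_S|² + ⨍_S |f₂ - (f₂)_S|²`. -/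
theorem stmt_12 (n : ℕ)
    (S : Set (EuclideanSpace ℝ (Fin n))) (hS : MeasurableSet S)
    (h0 : 0 < volume S) (hfin : volume S < ⊤)
    (f₁ f₂ : EuclideanSpace ℝ (Fin n) → ℝ)
    (hf₁ : MemLp f₁ 2 (volume.restrict S)) (hf₂ : MemLp f₂ 2 (volume.restrict S)) :
    (⨍ x in S, |max (f₁ x) (f₂ x) - ⨍ y in S, max (f₁ y) (f₂ y)| ^ 2)
      ≤ (⨍ x in S, |f₁ x - ⨍ y in S, f₁ y| ^ 2) + ⨍ x in S, |f₂ x - ⨍ y in S, f₂ y| ^ 2 :=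
  stmt_12_general n S hfin f₁ f₂ hf₁ hf₂
end

section
/- Let Ω = X × Y where X ⊂ R^m and Y ⊂ R^l are measurable, and let S ⊂ X, T ⊂ Y be measurable with finite positive measures; set R = S × T. Let f ∈ L^p(R), 1 ≤ p < ∞. Suppose that for a.e. y ∈ T the slice f_y = f(·, y) satisfies (⨍_S |f_y - (f_y)_S|^p)^{1/p} ≤ A, and for a.e. x ∈ S the slice f_x = f(x, ·) satisfies (⨍_T |f_x - (f_x)_T|^p)^{1/p} ≤ B. Then (⨍_R |f - f_R|^p)^{1/p} ≤ A + B. -/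
/-!
Write `g y = ∫ f(x, y) dx` for the `S`-average of the slice `f_y`, all integrals being averages.
Minkowski splits `f - f_R = (f - g ∘ snd) + (g ∘ snd - f_R)`. By Fubini the `L^p(R)`-norm of the
first term is an average over `T` of the slice oscillations, hence at most `A`. For the second,
`g y - f_R = ∫ (f(x, y) - (f_x)_T) dx` because `f_R` is the `S`-average of `(f_x)_T`, so Jensen
bounds its `L^p` norm by that of `f - (f_x)_T`, which by Fubini again is at most `B`.
-/

open MeasureTheory ENNReal ProbabilityTheory

namespace MeasureTheory

section Slices

variable {α β E : Type*} [MeasurableSpace α] [MeasurableSpace β] [NormedAddCommGroup E]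
  {μ : Measure α} {ν : Measure β} {p : ℝ≥0∞}

theorem MemLp.prod_right_ae [SFinite μ] [SFinite ν] {f : α × β → E} (hp0 : p ≠ 0) (hp : p ≠ ∞)
    (hf : MemLp f p (μ.prod ν)) : ∀ᵐ x ∂μ, MemLp (fun y => f (x, y)) p ν := by
  filter_upwards [((integrable_norm_rpow_iff hf.1 hp0 hp).2 hf).prod_right_ae,
    hf.1.prodMk_left] with x hx hmeas
  exact (integrable_norm_rpow_iff hmeas hp0 hp).1 hx

theorem MemLp.prod_left_ae [SFinite μ] [SFinite ν] {f : α × β → E} (hp0 : p ≠ 0) (hp : p ≠ ∞)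
    (hf : MemLp f p (μ.prod ν)) : ∀ᵐ y ∂ν, MemLp (fun x => f (x, y)) p μ :=
  MemLp.prod_right_ae hp0 hp (hf.comp_measurePreserving Measure.measurePreserving_swap)

theorem eLpNorm_prod_rpow_eq_lintegral_left [SFinite μ] [SFinite ν] {F : α × β → E}
    (hF : AEStronglyMeasurable F (μ.prod ν)) (hp0 : p ≠ 0) (hp : p ≠ ∞) :
    eLpNorm F p (μ.prod ν) ^ p.toReal =
      ∫⁻ y, eLpNorm (fun x => F (x, y)) p μ ^ p.toReal ∂ν := by
  simp only [eLpNorm_eq_eLpNorm' hp0 hp,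
    ← lintegral_rpow_enorm_eq_rpow_eLpNorm' (toReal_pos hp0 hp)]
  exact lintegral_prod_symm _ (hF.enorm.pow_const _)

theorem eLpNorm_prod_rpow_eq_lintegral_right [SFinite ν] {F : α × β → E}
    (hF : AEStronglyMeasurable F (μ.prod ν)) (hp0 : p ≠ 0) (hp : p ≠ ∞) :
    eLpNorm F p (μ.prod ν) ^ p.toReal =
      ∫⁻ x, eLpNorm (fun y => F (x, y)) p ν ^ p.toReal ∂μ := by
  simp only [eLpNorm_eq_eLpNorm' hp0 hp,
    ← lintegral_rpow_enorm_eq_rpow_eLpNorm' (toReal_pos hp0 hp)]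
  exact lintegral_prod _ (hF.enorm.pow_const _)

theorem eLpNorm_prod_le_of_ae_eLpNorm_left_le [SFinite μ] [IsProbabilityMeasure ν]
    {F : α × β → E} (hF : AEStronglyMeasurable F (μ.prod ν)) (hp0 : p ≠ 0) (hp : p ≠ ∞) {C : ℝ≥0∞}
    (hC : ∀ᵐ y ∂ν, eLpNorm (fun x => F (x, y)) p μ ≤ C) :
    eLpNorm F p (μ.prod ν) ≤ C := by
  have hq := toReal_pos hp0 hp
  rw [← rpow_le_rpow_iff hq, eLpNorm_prod_rpow_eq_lintegral_left hF hp0 hp]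
  calc ∫⁻ y, eLpNorm (fun x => F (x, y)) p μ ^ p.toReal ∂ν
      ≤ ∫⁻ _, C ^ p.toReal ∂ν := lintegral_mono_ae (hC.mono fun _ hy => rpow_le_rpow hy hq.le)
    _ = C ^ p.toReal := by simp

theorem eLpNorm_prod_le_of_ae_eLpNorm_right_le [IsProbabilityMeasure μ] [SFinite ν]
    {F : α × β → E} (hF : AEStronglyMeasurable F (μ.prod ν)) (hp0 : p ≠ 0) (hp : p ≠ ∞) {C : ℝ≥0∞}
    (hC : ∀ᵐ x ∂μ, eLpNorm (fun y => F (x, y)) p ν ≤ C) :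
    eLpNorm F p (μ.prod ν) ≤ C := by
  have hq := toReal_pos hp0 hp
  rw [← rpow_le_rpow_iff hq, eLpNorm_prod_rpow_eq_lintegral_right hF hp0 hp]
  calc ∫⁻ x, eLpNorm (fun y => F (x, y)) p ν ^ p.toReal ∂μ
      ≤ ∫⁻ _, C ^ p.toReal ∂μ := lintegral_mono_ae (hC.mono fun _ hx => rpow_le_rpow hx hq.le)
    _ = C ^ p.toReal := by simp

end Slices

section Oscillation

variable {α β E : Type*} [MeasurableSpace α] [MeasurableSpace β] [NormedAddCommGroup E]
  [NormedSpace ℝ E] {μ : Measure α} {ν : Measure β} {p : ℝ≥0∞}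

theorem enorm_integral_le_eLpNorm [IsProbabilityMeasure μ] {u : α → E} (hp : 1 ≤ p)
    (hu : AEStronglyMeasurable u μ) : ‖∫ a, u a ∂μ‖ₑ ≤ eLpNorm u p μ :=
  calc ‖∫ a, u a ∂μ‖ₑ ≤ ∫⁻ a, ‖u a‖ₑ ∂μ := enorm_integral_le_lintegral_enorm u
    _ = eLpNorm u 1 μ := eLpNorm_one_eq_lintegral_enorm.symm
    _ ≤ eLpNorm u p μ := eLpNorm_le_eLpNorm_of_exponent_le hp hu

variable [IsProbabilityMeasure μ] [IsProbabilityMeasure ν]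

theorem eLpNorm_integral_left_sub_integral_prod_le (hp : 1 ≤ p) (hp_top : p ≠ ∞)
    {f : α × β → E} (hf : MemLp f p (μ.prod ν)) :
    eLpNorm (fun z => ∫ x, f (x, z.2) ∂μ - ∫ w, f w ∂(μ.prod ν)) p (μ.prod ν) ≤
      eLpNorm (fun z => f z - ∫ y, f (z.1, y) ∂ν) p (μ.prod ν) := by
  have hp0 : p ≠ 0 := (zero_lt_one.trans_le hp).ne'
  have hq := toReal_pos hp0 hp_top
  set h : α → E := fun x => ∫ y, f (x, y) ∂ν
  have hfi : Integrable f (μ.prod ν) := hf.integrable hp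
  have hhm : AEStronglyMeasurable h μ := hf.1.integral_prod_right'
  have hjensen : ∀ᵐ y ∂ν, ‖∫ x, f (x, y) ∂μ - ∫ w, f w ∂(μ.prod ν)‖ₑ ≤
      eLpNorm (fun x => f (x, y) - h x) p μ := by
    filter_upwards [hf.prod_left_ae hp0 hp_top] with y hy
    rw [integral_prod f hfi, ← integral_sub (hy.integrable hp) hfi.integral_prod_left]
    exact enorm_integral_le_eLpNorm hp (hy.1.sub hhm)
  rw [← rpow_le_rpow_iff hq,
    eLpNorm_prod_rpow_eq_lintegral_left (F := fun z => f z - h z.1)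
      (hf.1.sub hhm.comp_fst) hp0 hp_top,
    eLpNorm_prod_rpow_eq_lintegral_left (F := fun z => ∫ x, f (x, z.2) ∂μ - ∫ w, f w ∂(μ.prod ν))
      (hf.1.prod_swap.integral_prod_right'.comp_snd.sub aestronglyMeasurable_const) hp0 hp_top]
  refine lintegral_mono_ae (hjensen.mono fun y hy => ?_)
  simpa [eLpNorm_const _ hp0 (NeZero.ne μ)] using rpow_le_rpow hy hq.le

theorem eLpNorm_sub_integral_prod_le (hp : 1 ≤ p) (hp_top : p ≠ ∞)
    {f : α × β → E} (hf : MemLp f p (μ.prod ν)) {A B : ℝ≥0∞}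
    (hA : ∀ᵐ y ∂ν, eLpNorm (fun x => f (x, y) - ∫ x', f (x', y) ∂μ) p μ ≤ A)
    (hB : ∀ᵐ x ∂μ, eLpNorm (fun y => f (x, y) - ∫ y', f (x, y') ∂ν) p ν ≤ B) :
    eLpNorm (fun z => f z - ∫ w, f w ∂(μ.prod ν)) p (μ.prod ν) ≤ A + B := by
  have hp0 : p ≠ 0 := (zero_lt_one.trans_le hp).ne'
  set g : β → E := fun y => ∫ x, f (x, y) ∂μ
  have hgm : AEStronglyMeasurable g ν := hf.1.prod_swap.integral_prod_right'
  have hsplit : (fun z => f z - ∫ w, f w ∂(μ.prod ν)) =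
      (fun z => f z - g z.2) + fun z => g z.2 - ∫ w, f w ∂(μ.prod ν) := by
    ext; simp
  rw [hsplit]
  refine (eLpNorm_add_le (hf.1.sub hgm.comp_snd)
    (hgm.comp_snd.sub aestronglyMeasurable_const) hp).trans (add_le_add ?_ ?_)
  · exact eLpNorm_prod_le_of_ae_eLpNorm_left_le (hf.1.sub hgm.comp_snd) hp0 hp_top hA
  · exact (eLpNorm_integral_left_sub_integral_prod_le hp hp_top hf).trans
      (eLpNorm_prod_le_of_ae_eLpNorm_right_le (hf.1.sub hf.1.integral_prod_right'.comp_fst)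
        hp0 hp_top hB)

end Oscillation

theorem ofReal_integral_abs_rpow_rpow_eq_eLpNorm {α : Type*} [MeasurableSpace α]
    {μ : Measure α} {q : ℝ} (hq : 0 < q) {u : α → ℝ} (hu : MemLp u (ENNReal.ofReal q) μ) :
    ENNReal.ofReal ((∫ a, |u a| ^ q ∂μ) ^ (1 / q)) = eLpNorm u (ENNReal.ofReal q) μ := by
  rw [hu.eLpNorm_eq_integral_rpow_norm (by simpa using hq) ofReal_ne_top, toReal_ofReal hq.le,
    one_div]
  simp only [Real.norm_eq_abs]

theorem integral_abs_sub_integral_prod_rpow_le {α β : Type*} [MeasurableSpace α]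
    [MeasurableSpace β] {μ : Measure α} {ν : Measure β} [IsProbabilityMeasure μ]
    [IsProbabilityMeasure ν] {p : ℝ} (hp : 1 ≤ p) {f : α × β → ℝ}
    (hf : MemLp f (ENNReal.ofReal p) (μ.prod ν)) {A B : ℝ}
    (hA : ∀ᵐ y ∂ν, (∫ x, |f (x, y) - ∫ x', f (x', y) ∂μ| ^ p ∂μ) ^ (1 / p) ≤ A)
    (hB : ∀ᵐ x ∂μ, (∫ y, |f (x, y) - ∫ y', f (x, y') ∂ν| ^ p ∂ν) ^ (1 / p) ≤ B) :
    (∫ z, |f z - ∫ w, f w ∂(μ.prod ν)| ^ p ∂(μ.prod ν)) ^ (1 / p) ≤ A + B := by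
  have hp0 : 0 < p := zero_lt_one.trans_le hp
  have hp0' : ENNReal.ofReal p ≠ 0 := by simpa using hp0
  have hA0 : 0 ≤ A := by obtain ⟨_, hy⟩ := hA.exists; exact le_trans (by positivity) hy
  have hB0 : 0 ≤ B := by obtain ⟨_, hx⟩ := hB.exists; exact le_trans (by positivity) hx
  -- A.e. slice is in `L^p`, so the real `p`-means in `hA`, `hB` are not junk values.
  have hA' : ∀ᵐ y ∂ν, eLpNorm (fun x => f (x, y) - ∫ x', f (x', y) ∂μ) (.ofReal p) μ ≤
      .ofReal A := by
    filter_upwards [hA, hf.prod_left_ae hp0' ofReal_ne_top] with y hy hslice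
    rw [← ofReal_integral_abs_rpow_rpow_eq_eLpNorm (u := fun x => f (x, y) - ∫ x', f (x', y) ∂μ)
      hp0 (hslice.sub (memLp_const _))]
    exact ofReal_le_ofReal hy
  have hB' : ∀ᵐ x ∂μ, eLpNorm (fun y => f (x, y) - ∫ y', f (x, y') ∂ν) (.ofReal p) ν ≤
      .ofReal B := by
    filter_upwards [hB, hf.prod_right_ae hp0' ofReal_ne_top] with x hx hslice
    rw [← ofReal_integral_abs_rpow_rpow_eq_eLpNorm (u := fun y => f (x, y) - ∫ y', f (x, y') ∂ν)
      hp0 (hslice.sub (memLp_const _))]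
    exact ofReal_le_ofReal hx
  rw [← ofReal_le_ofReal_iff (by positivity),
    ofReal_integral_abs_rpow_rpow_eq_eLpNorm (u := fun z => f z - ∫ w, f w ∂(μ.prod ν)) hp0
      (hf.sub (memLp_const _)), ofReal_add hA0 hB0]
  exact eLpNorm_sub_integral_prod_le (by simpa using ofReal_le_ofReal hp) ofReal_ne_top hf hA' hB'

end MeasureTheory

namespace ProbabilityTheory

theorem cond_prod {α β : Type*} [MeasurableSpace α] [MeasurableSpace β] {μ : Measure α}
    {ν : Measure β} [SFinite μ] [SFinite ν] {s : Set α} {t : Set β} (hs : μ s ≠ ∞)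
    (ht : ν t ≠ ∞) : (μ[|s]).prod (ν[|t]) = (μ.prod ν)[|s ×ˢ t] := by
  simp only [cond, Measure.prod_smul_left, Measure.prod_smul_right,
    Measure.prod_restrict, Measure.prod_prod, ENNReal.mul_inv (.inr ht) (.inl hs), smul_smul,
    mul_comm]

end ProbabilityTheory

theorem stmt_19_general (m l : ℕ) (p : ℝ) (hp : 1 ≤ p)
    (S : Set (EuclideanSpace ℝ (Fin m))) (T : Set (EuclideanSpace ℝ (Fin l)))
    (hS0 : 0 < volume S) (hSfin : volume S < ⊤)
    (hT0 : 0 < volume T) (hTfin : volume T < ⊤)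
    (f : EuclideanSpace ℝ (Fin m) × EuclideanSpace ℝ (Fin l) → ℝ)
    (hf : MemLp f (ENNReal.ofReal p) (volume.restrict (S ×ˢ T)))
    (A B : ℝ)
    (hA : ∀ᵐ y ∂(volume.restrict T),
      (⨍ x in S, |f (x, y) - ⨍ x' in S, f (x', y)| ^ p) ^ (1 / p) ≤ A)
    (hB : ∀ᵐ x ∂(volume.restrict S),
      (⨍ y in T, |f (x, y) - ⨍ y' in T, f (x, y')| ^ p) ^ (1 / p) ≤ B) :
    (⨍ z in S ×ˢ T, |f z - ⨍ w in S ×ˢ T, f w| ^ p) ^ (1 / p) ≤ A + B := by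
  have := cond_isProbabilityMeasure_of_finite hS0.ne' hSfin.ne
  have := cond_isProbabilityMeasure_of_finite hT0.ne' hTfin.ne
  have hprod : (volume[|S]).prod (volume[|T]) = volume[|S ×ˢ T] :=
    cond_prod hSfin.ne hTfin.ne
  have hST0 : volume (S ×ˢ T) ≠ 0 := by
    rw [Measure.volume_eq_prod, Measure.prod_prod]
    exact mul_ne_zero hS0.ne' hT0.ne'
  have hf' : MemLp f (ENNReal.ofReal p) ((volume[|S]).prod (volume[|T])) :=
    hprod ▸ hf.smul_measure (ENNReal.inv_ne_top.2 hST0)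
  -- `volume[|S]` unfolds to `(volume S)⁻¹ • volume.restrict S`, the measure of `setAverage_eq'`.
  simp only [setAverage_eq'] at hA hB ⊢
  have key := integral_abs_sub_integral_prod_rpow_le hp hf'
    (Measure.ae_smul_measure hA _) (Measure.ae_smul_measure hB _)
  rwa [hprod] at key

/-- On `R = S × T`, if the `p`-mean oscillation of a.e. horizontal slice of
`f` over `S` is at most `A`, and of a.e. vertical slice over `T` is at most `B`, then the
`p`-mean oscillation of `f` over `R` is at most `A + B`. -/
theorem stmt_19 (m l : ℕ) (p : ℝ) (hp : 1 ≤ p)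
    (S : Set (EuclideanSpace ℝ (Fin m))) (T : Set (EuclideanSpace ℝ (Fin l)))
    (hSm : MeasurableSet S) (hTm : MeasurableSet T)
    (hS0 : 0 < volume S) (hSfin : volume S < ⊤)
    (hT0 : 0 < volume T) (hTfin : volume T < ⊤)
    (f : EuclideanSpace ℝ (Fin m) × EuclideanSpace ℝ (Fin l) → ℝ)
    (hf : MemLp f (ENNReal.ofReal p) (volume.restrict (S ×ˢ T)))
    (A B : ℝ)
    (hA : ∀ᵐ y ∂(volume.restrict T),
      (⨍ x in S, |f (x, y) - ⨍ x' in S, f (x', y)| ^ p) ^ (1 / p) ≤ A)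
    (hB : ∀ᵐ x ∂(volume.restrict S),
      (⨍ y in T, |f (x, y) - ⨍ y' in T, f (x, y')| ^ p) ^ (1 / p) ≤ B) :
    (⨍ z in S ×ˢ T, |f z - ⨍ w in S ×ˢ T, f w| ^ p) ^ (1 / p) ≤ A + B :=
  stmt_19_general m l p hp S T hS0 hSfin hT0 hTfin f hf A B hA hB
end
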